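/- arXiv:1804.10675 — 2 statements merged into one kernel-verified Lean document; each statement's English description precedes it below -/
import Mathlib

section
/- The map (τ, ν) ↦ (τ/ν, τ(τ+1)/ν² + y τ²/ν²) from (0,∞)² to ℝ² is injective for any fixed y > 0. -/
/-! With `m = τ/ν`, the second moment is `(1 + y) m² + m/ν`, so the two moments determine
`m > 0`, then `ν`, then `τ = m ν`. -/

lemma gamma_mp_second_moment_eq (y τ ν : ℝ) (hν : ν ≠ 0) :
    τ * (τ + 1) / ν ^ 2 + y * τ ^ 2 / ν ^ 2 = (1 + y) * (τ / ν) ^ 2 + τ / ν / ν := by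
  field_simp
  ring

theorem stmt13_general (y : ℝ) :
    Set.InjOn
      (fun p : ℝ × ℝ =>
        (p.1 / p.2, p.1 * (p.1 + 1) / p.2 ^ 2 + y * p.1 ^ 2 / p.2 ^ 2))
      (Set.Ioi 0 ×ˢ Set.Ioi 0) := by
  rintro ⟨τ, ν⟩ ⟨-, hν⟩ ⟨τ', ν'⟩ ⟨hτ', hν'⟩ h
  simp only [Set.mem_Ioi, Prod.mk.injEq] at hν hτ' hν' h ⊢
  obtain ⟨hmean, hsecond⟩ := h
  rw [gamma_mp_second_moment_eq y τ ν hν.ne', gamma_mp_second_moment_eq y τ' ν' hν'.ne',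
    hmean, add_right_inj] at hsecond
  have hrate : ν = ν' := inv_inj.mp (mul_right_injective₀ (div_pos hτ' hν').ne' hsecond)
  subst hrate
  exact ⟨(div_left_inj' hν.ne').mp hmean, rfl⟩

/-- Identifiability of the Gamma PSD parameters from the first two
Marcenko-Pastur moments: for fixed `y > 0`, the map
`(τ, ν) ↦ (τ/ν, τ(τ+1)/ν² + y τ²/ν²)` is injective on `(0,∞)²`. -/
theorem stmt13 (y : ℝ) (hy : 0 < y) :
    Set.InjOn
      (fun p : ℝ × ℝ =>
        (p.1 / p.2, p.1 * (p.1 + 1) / p.2 ^ 2 + y * p.1 ^ 2 / p.2 ^ 2))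
      (Set.Ioi 0 ×ˢ Set.Ioi 0) :=
  stmt13_general y
end

section
/- Let H, H' be compactly supported probability measures on [0,∞) and y > 0. If ψ_{y,H}(α) = ψ_{y,H'}(α) for all α in some nonempty open interval lying strictly above both supports, then ∫ tʲ dH(t) = ∫ tʲ dH'(t) for all j ≥ 1, and hence H = H'. -/
/-!
Put `x = α⁻¹`. Since `t / (α - t) = (1 - t x)⁻¹ - 1`, the hypothesis says that
`F_H(x) = ∫ (1 - t x)⁻¹ dH(t)` agrees with `F_{H'}` on the interval `(e⁻¹, c⁻¹)`. As `H` lives on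
`[0, b]` with `b < c`, expanding the geometric series under the integral gives
`F_H(x) = ∑ⱼ (∫ tʲ dH) xʲ` on the ball of radius `c⁻¹`. This ball is connected and contains the
interval, so by the identity theorem the two power series coincide, i.e. all moments agree.
A measure on a compact interval is determined by its moments: by Weierstrass approximation they
determine the integral of every continuous function.
-/

open MeasureTheory Set Filter Topology FormalMultilinearSeries
open scoped NNReal ENNReal

theorem ContinuousOn.integrable_of_ae_mem {X E : Type*} [TopologicalSpace X] [T2Space X]
    [MeasurableSpace X] [OpensMeasurableSpace X] [NormedAddCommGroup E] {μ : Measure X}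
    [IsFiniteMeasureOnCompacts μ] {f : X → E} {K : Set X} (hK : IsCompact K)
    (hf : ContinuousOn f K) (hμ : ∀ᵐ t ∂μ, t ∈ K) : Integrable f μ := by
  rw [← Measure.restrict_eq_self_of_ae_mem hμ]
  exact hf.integrableOn_compact hK

namespace FormalMultilinearSeries

theorem le_radius_ofScalars_of_abs_le_pow {a : ℕ → ℝ} {b : ℝ} {r : ℝ≥0}
    (ha : ∀ j, |a j| ≤ b ^ j) (hbr : b * r ≤ 1) : (r : ℝ≥0∞) ≤ (ofScalars ℝ a).radius := by
  have hb : 0 ≤ b := (abs_nonneg _).trans (by simpa using ha 1)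
  refine le_radius_of_bound _ 1 fun n => ?_
  rw [ofScalars_norm, Real.norm_eq_abs]
  calc |a n| * r ^ n ≤ b ^ n * r ^ n := by gcongr; exact ha n
    _ = (b * r) ^ n := (mul_pow _ _ _).symm
    _ ≤ 1 := pow_le_one₀ (by positivity) hbr

theorem eq_of_ofScalarsSum_eqOn {a a' : ℕ → ℝ} {r : ℝ≥0}
    (ha : (r : ℝ≥0∞) ≤ (ofScalars ℝ a).radius) (ha' : (r : ℝ≥0∞) ≤ (ofScalars ℝ a').radius)
    {s : Set ℝ} (hs : IsOpen s) (hsne : s.Nonempty) (hsr : s ⊆ Metric.ball 0 r)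
    (h : EqOn (ofScalarsSum (E := ℝ) a) (ofScalarsSum (E := ℝ) a') s) : a = a' := by
  obtain ⟨z, hz⟩ := hsne
  have hr : (0 : ℝ≥0∞) < r := ENNReal.coe_pos.2 (dist_nonneg.trans_lt (hsr hz))
  have hp := ((ofScalars ℝ a).hasFPowerSeriesOnBall (hr.trans_le ha)).mono hr ha
  have hp' := ((ofScalars ℝ a').hasFPowerSeriesOnBall (hr.trans_le ha')).mono hr ha'
  have hball : EqOn (ofScalarsSum (E := ℝ) a) (ofScalarsSum (E := ℝ) a') (Metric.eball 0 r) := by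
    refine hp.analyticOnNhd.eqOn_of_preconnected_of_eventuallyEq hp'.analyticOnNhd ?_
      (by rw [Metric.eball_coe]; exact hsr hz) (eventually_of_mem (hs.mem_nhds hz) h)
    rw [Metric.eball_coe]
    exact (convex_ball _ _).isPreconnected
  have hnhds : ofScalarsSum (E := ℝ) a =ᶠ[𝓝 0] ofScalarsSum (E := ℝ) a' :=
    eventually_of_mem (Metric.isOpen_eball.mem_nhds (Metric.mem_eball_self hr)) hball
  rw [← ofScalars_series_eq_iff ℝ]
  exact (hp.hasFPowerSeriesAt.congr hnhds).eq_formalMultilinearSeries hp'.hasFPowerSeriesAt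

end FormalMultilinearSeries

namespace MeasureTheory

variable {μ ν : Measure ℝ}

theorem ae_mem_Icc_of_measure_Iio_of_measure_Ioi {a b : ℝ}
    (ha : μ (Iio a) = 0) (hb : μ (Ioi b) = 0) : ∀ᵐ t ∂μ, t ∈ Icc a b :=
  mem_ae_iff.2 <| measure_mono_null (fun t ht => by
    rw [mem_union, mem_Iio, mem_Ioi]
    by_contra! h
    exact ht h)
    (measure_union_null ha hb)

section Polynomial

open Polynomial

theorem integral_eval_eq_of_integral_pow_eq [IsFiniteMeasure μ] [IsFiniteMeasure ν] {K : Set ℝ}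
    (hK : IsCompact K) (hμ : ∀ᵐ t ∂μ, t ∈ K) (hν : ∀ᵐ t ∂ν, t ∈ K)
    (h : ∀ j : ℕ, ∫ t, t ^ j ∂μ = ∫ t, t ^ j ∂ν) (P : ℝ[X]) :
    ∫ t, P.eval t ∂μ = ∫ t, P.eval t ∂ν := by
  have hint : ∀ (Q : ℝ[X]) {ρ : Measure ℝ} [IsFiniteMeasure ρ], (∀ᵐ t ∂ρ, t ∈ K) →
      Integrable (fun t => Q.eval t) ρ := fun Q _ _ hρ =>
    Q.continuous.continuousOn.integrable_of_ae_mem hK hρ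
  induction P using Polynomial.induction_on' with
  | add p q hp hq =>
    simp only [eval_add]
    rw [integral_add (hint p hμ) (hint q hμ), integral_add (hint p hν) (hint q hν), hp, hq]
  | monomial n a =>
    simp only [eval_monomial]
    rw [integral_const_mul, integral_const_mul, h]

theorem integral_eq_of_integral_pow_eq [IsFiniteMeasure μ] [IsFiniteMeasure ν] {a b : ℝ}
    (hμ : ∀ᵐ t ∂μ, t ∈ Icc a b) (hν : ∀ᵐ t ∂ν, t ∈ Icc a b)
    (h : ∀ j : ℕ, ∫ t, t ^ j ∂μ = ∫ t, t ^ j ∂ν) {g : ℝ → ℝ} (hg : ContinuousOn g (Icc a b)) :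
    ∫ t, g t ∂μ = ∫ t, g t ∂ν := by
  have hclose : ∀ {ρ : Measure ℝ} [IsFiniteMeasure ρ], (∀ᵐ t ∂ρ, t ∈ Icc a b) →
      ∀ (P : ℝ[X]) (ε : ℝ), (∀ t ∈ Icc a b, |P.eval t - g t| < ε) →
      |∫ t, g t ∂ρ - ∫ t, P.eval t ∂ρ| ≤ ε * ρ.real univ := by
    intro ρ _ hρ P ε hP
    rw [← integral_sub (hg.integrable_of_ae_mem isCompact_Icc hρ)
      (P.continuous.continuousOn.integrable_of_ae_mem isCompact_Icc hρ), ← Real.norm_eq_abs]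
    refine norm_integral_le_of_norm_le_const ?_
    filter_upwards [hρ] with t ht
    rw [Real.norm_eq_abs, abs_sub_comm]
    exact (hP t ht).le
  set M := μ.real univ + ν.real univ
  have hbound : ∀ ε ∈ Ioi (0 : ℝ), |∫ t, g t ∂μ - ∫ t, g t ∂ν| ≤ ε * M := by
    intro ε hε
    obtain ⟨P, hP⟩ := exists_polynomial_near_of_continuousOn a b g hg ε hε
    calc |∫ t, g t ∂μ - ∫ t, g t ∂ν|
        = |(∫ t, g t ∂μ - ∫ t, P.eval t ∂μ) - (∫ t, g t ∂ν - ∫ t, P.eval t ∂ν)| := by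
          rw [integral_eval_eq_of_integral_pow_eq isCompact_Icc hμ hν h P, sub_sub_sub_cancel_right]
      _ ≤ |∫ t, g t ∂μ - ∫ t, P.eval t ∂μ| + |∫ t, g t ∂ν - ∫ t, P.eval t ∂ν| := abs_sub _ _
      _ ≤ ε * μ.real univ + ε * ν.real univ := add_le_add (hclose hμ P ε hP) (hclose hν P ε hP)
      _ = ε * M := (mul_add _ _ _).symm
  have hlim : Tendsto (fun ε => ε * M) (𝓝[>] 0) (𝓝 0) := by
    simpa using ((continuous_id.mul_const M).tendsto 0).mono_left nhdsWithin_le_nhds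
  exact sub_eq_zero.1 <| abs_nonpos_iff.1 <|
    ge_of_tendsto hlim (eventually_nhdsWithin_of_forall hbound)

theorem Measure.ext_of_integral_pow_eq [IsFiniteMeasure μ] [IsFiniteMeasure ν] {a b : ℝ}
    (hμ : ∀ᵐ t ∂μ, t ∈ Icc a b) (hν : ∀ᵐ t ∂ν, t ∈ Icc a b)
    (h : ∀ j : ℕ, ∫ t, t ^ j ∂μ = ∫ t, t ^ j ∂ν) : μ = ν :=
  ext_of_forall_integral_eq_of_IsFiniteMeasure fun f =>
    integral_eq_of_integral_pow_eq hμ hν h f.continuous.continuousOn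

end Polynomial

theorem abs_integral_pow_le [IsProbabilityMeasure μ] {b : ℝ} (hμ : ∀ᵐ t ∂μ, |t| ≤ b) (j : ℕ) :
    |∫ t, t ^ j ∂μ| ≤ b ^ j := by
  rw [← Real.norm_eq_abs]
  simpa using norm_integral_le_of_norm_le_const (μ := μ) (f := fun t => t ^ j) (C := b ^ j) <| by
    filter_upwards [hμ] with t ht
    rw [norm_pow, Real.norm_eq_abs]
    exact pow_le_pow_left₀ (abs_nonneg t) ht j

theorem hasSum_integral_pow_mul_pow [IsFiniteMeasure μ] {b x : ℝ} (hb : 0 ≤ b)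
    (hμ : ∀ᵐ t ∂μ, |t| ≤ b) (hbx : b * |x| < 1) :
    HasSum (fun j : ℕ => (∫ t, t ^ j ∂μ) * x ^ j) (∫ t, (1 - t * x)⁻¹ ∂μ) := by
  have hle : ∀ᵐ t ∂μ, ∀ j : ℕ, ‖(t * x) ^ j‖ ≤ (b * |x|) ^ j := by
    filter_upwards [hμ] with t ht j
    rw [norm_pow, norm_mul, Real.norm_eq_abs, Real.norm_eq_abs]
    gcongr
  have hint : ∀ j : ℕ, Integrable (fun t => (t * x) ^ j) μ := fun j =>
    Integrable.of_bound (by fun_prop) _ (hle.mono fun t ht => ht j)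
  have hsum : Summable fun j : ℕ => ∫ t, ‖(t * x) ^ j‖ ∂μ := by
    refine ((summable_geometric_of_lt_one (by positivity) hbx).mul_right
      (μ.real univ)).of_nonneg_of_le (fun j => integral_nonneg fun _ => norm_nonneg _) fun j => ?_
    exact (Real.le_norm_self _).trans <| norm_integral_le_of_norm_le_const (hle.mono fun t ht => by rw [norm_norm]; exact ht j)
  have hgeom : ∫ t, ∑' j : ℕ, (t * x) ^ j ∂μ = ∫ t, (1 - t * x)⁻¹ ∂μ := by
    refine integral_congr_ae ?_
    filter_upwards [hle] with t ht
    exact tsum_geometric_of_norm_lt_one (by simpa using (ht 1).trans_lt (by simpa using hbx))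
  have hterm := hasSum_integral_of_summable_integral_norm hint hsum
  rw [hgeom] at hterm
  simpa only [mul_pow, integral_mul_const] using hterm

theorem integral_inv_one_sub_mul_eq_one_add [IsProbabilityMeasure μ] {b x : ℝ} (hx : x ≠ 0)
    (hμ : ∀ᵐ t ∂μ, |t| ≤ b) (hbx : b * |x| < 1) :
    ∫ t, (1 - t * x)⁻¹ ∂μ = 1 + ∫ t, t / (x⁻¹ - t) ∂μ := by
  have hpos : ∀ᵐ t ∂μ, 1 - b * |x| ≤ 1 - t * x := by
    filter_upwards [hμ] with t ht
    have := (le_abs_self (t * x)).trans (abs_mul t x).le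
    nlinarith [abs_nonneg x]
  have hint : Integrable (fun t => (1 - t * x)⁻¹) μ :=
    Integrable.of_bound (by fun_prop) (1 - b * |x|)⁻¹ <| hpos.mono fun t ht => by
      rw [Real.norm_eq_abs, abs_inv, abs_of_pos (by linarith)]
      exact inv_anti₀ (by linarith) ht
  have hcongr : (fun t => t / (x⁻¹ - t)) =ᵐ[μ] fun t => (1 - t * x)⁻¹ - 1 := by
    filter_upwards [hpos] with t ht
    have : 1 - t * x ≠ 0 := by linarith
    field_simp
    ring
  rw [integral_congr_ae hcongr, integral_sub hint (integrable_const 1)]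
  simp

theorem ofScalarsSum_integral_pow [IsFiniteMeasure μ] {b x : ℝ} (hb : 0 ≤ b)
    (hμ : ∀ᵐ t ∂μ, |t| ≤ b) (hbx : b * |x| < 1) :
    ofScalarsSum (E := ℝ) (fun j => ∫ t, t ^ j ∂μ) x = ∫ t, (1 - t * x)⁻¹ ∂μ := by
  rw [ofScalars_sum_eq]
  simpa only [smul_eq_mul] using (hasSum_integral_pow_mul_pow hb hμ hbx).tsum_eq

theorem integral_pow_eq_of_eqOn_integral_inv_one_sub_mul [IsProbabilityMeasure μ]
    [IsProbabilityMeasure ν] {b : ℝ} {r : ℝ≥0} (hb : 0 ≤ b) (hμ : ∀ᵐ t ∂μ, |t| ≤ b)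
    (hν : ∀ᵐ t ∂ν, |t| ≤ b) (hbr : b * r ≤ 1) {s : Set ℝ} (hs : IsOpen s) (hsne : s.Nonempty)
    (hsr : s ⊆ Metric.ball 0 r)
    (h : EqOn (fun x => ∫ t, (1 - t * x)⁻¹ ∂μ) (fun x => ∫ t, (1 - t * x)⁻¹ ∂ν) s) (j : ℕ) :
    ∫ t, t ^ j ∂μ = ∫ t, t ^ j ∂ν := by
  have hbx : ∀ x ∈ s, b * |x| < 1 := fun x hx => by
    have hxr : |x| < r := by simpa using hsr hx
    rcases hb.eq_or_lt with rfl | hb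
    · simp
    · exact (mul_lt_mul_of_pos_left hxr hb).trans_le hbr
  refine congrFun (eq_of_ofScalarsSum_eqOn (le_radius_ofScalars_of_abs_le_pow
    (abs_integral_pow_le hμ) hbr) (le_radius_ofScalars_of_abs_le_pow (abs_integral_pow_le hν) hbr)
    hs hsne hsr fun x hx => ?_) j
  rw [ofScalarsSum_integral_pow hb hμ (hbx x hx), ofScalarsSum_integral_pow hb hν (hbx x hx)]
  exact h hx

end MeasureTheory

/-- Uniqueness underlying the psi-envelope PSD diagnostic: if two compactly
supported probability measures `H`, `H'` on `[0, ∞)` (supports in `[0, b]`) have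
Silverstein maps `ψ_{y,H}(α) = α + yα ∫ t/(α-t) dH(t)` agreeing on a nonempty open
interval `(c, e)` lying strictly above both supports, then all moments of `H` and
`H'` agree, and `H = H'`. -/
theorem stmt18 (H H' : Measure ℝ) [IsProbabilityMeasure H] [IsProbabilityMeasure H']
    (b y c e : ℝ) (hb : 0 ≤ b)
    (hsupp0 : H (Set.Iio 0) = 0) (hsuppb : H (Set.Ioi b) = 0)
    (hsupp0' : H' (Set.Iio 0) = 0) (hsuppb' : H' (Set.Ioi b) = 0)
    (hy : 0 < y) (hbc : b < c) (hce : c < e)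
    (hψ : ∀ α ∈ Set.Ioo c e,
      α + y * α * ∫ t, t / (α - t) ∂H = α + y * α * ∫ t, t / (α - t) ∂H') :
    (∀ j : ℕ, 1 ≤ j → ∫ t, t ^ j ∂H = ∫ t, t ^ j ∂H') ∧ H = H' := by
  have hH := ae_mem_Icc_of_measure_Iio_of_measure_Ioi hsupp0 hsuppb
  have hH' := ae_mem_Icc_of_measure_Iio_of_measure_Ioi hsupp0' hsuppb'
  have habs : ∀ {ρ : Measure ℝ}, (∀ᵐ t ∂ρ, t ∈ Icc 0 b) → ∀ᵐ t ∂ρ, |t| ≤ b := fun hρ =>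
    hρ.mono fun t ht => (abs_of_nonneg ht.1).trans_le ht.2
  have hc : 0 < c := hb.trans_lt hbc
  have he : 0 < e⁻¹ := inv_pos.2 (hc.trans hce)
  have hgen : EqOn (fun x => ∫ t, (1 - t * x)⁻¹ ∂H) (fun x => ∫ t, (1 - t * x)⁻¹ ∂H')
      (Ioo e⁻¹ c⁻¹) := by
    rintro x ⟨hex, hxc⟩
    have hx : 0 < x := he.trans hex
    have hbx : b * |x| < 1 := by
      calc b * |x| = b * x := by rw [abs_of_pos hx]
        _ < c * c⁻¹ := mul_lt_mul'' hbc hxc hb hx.le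
        _ = 1 := mul_inv_cancel₀ hc.ne'
    have hα : x⁻¹ ∈ Ioo c e := ⟨(lt_inv_comm₀ hc hx).2 hxc, (inv_lt_comm₀ hx (hc.trans hce)).2 hex⟩
    have hI := mul_left_cancel₀ (by positivity) (add_left_cancel (hψ x⁻¹ hα))
    simp only [integral_inv_one_sub_mul_eq_one_add hx.ne' (habs hH) hbx,
      integral_inv_one_sub_mul_eq_one_add hx.ne' (habs hH') hbx, hI]
  have hmom := integral_pow_eq_of_eqOn_integral_inv_one_sub_mul (r := ⟨c⁻¹, (inv_pos.2 hc).le⟩)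
    hb (habs hH) (habs hH') (mul_inv_le_one_of_le₀ hbc.le hc.le)
    isOpen_Ioo (nonempty_Ioo.2 (inv_strictAnti₀ hc hce))
    (fun x hx => by simpa [abs_lt] using ⟨by linarith [hx.1], hx.2⟩) hgen
  exact ⟨fun j _ => hmom j, Measure.ext_of_integral_pow_eq hH hH' hmom⟩
end
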